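/- arXiv:2211.01627 — 5 statements merged into one kernel-verified Lean document; each statement's English description precedes it below -/
import Mathlib

section
/- For all -1 ≤ y_{c1} < y_{c2} ≤ 1 with (y_{c1}, y_{c2}) ≠ (-1, 1), the region-based first-order Sobol' index of input X2 for the region C(y_{c1}, y_{c2}) equals SI_2^{C(y_{c1},y_{c2})} = (1 - y_{c2} + y_{c1})/(2 - y_{c2} + y_{c1}) if y_{c2} ≤ 0 or y_{c1} ≥ 0, and equals (1 - y_{c2} + y_{c1})/(2 - y_{c2} + y_{c1}) + 2·min(|y_{c1}|, y_{c2})/((y_{c2} - y_{c1})(2 - y_{c2} + y_{c1})) if y_{c1} ≤ 0 ≤ y_{c2}. -/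
open MeasureTheory ProbabilityTheory Set

/-- The uniform probability measure on the square [-1,1] × [-1,1]. -/
noncomputable def unifSq : Measure (ℝ × ℝ) :=
  (4 : ENNReal)⁻¹ •
    ((volume.restrict (Icc (-1 : ℝ) 1)).prod (volume.restrict (Icc (-1 : ℝ) 1)))

/-- sign(x) = 1 if x ≥ 0 and -1 if x < 0. -/
noncomputable def sgn (x : ℝ) : ℝ := if 0 ≤ x then 1 else -1

/-- The model output Y = sign(X1)·|X2|. -/
noncomputable def Ymod (ω : ℝ × ℝ) : ℝ := sgn ω.1 * |ω.2|

/-- The membership indicator 1_C(Y). -/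
noncomputable def indC (C : Set ℝ) (ω : ℝ × ℝ) : ℝ := C.indicator 1 (Ymod ω)

/-- Region-based first-order Sobol' index of input X (given as a coordinate map)
for the region C : Var(E[1_C(Y) | X]) / Var(1_C(Y)). -/
noncomputable def SIdx (X : ℝ × ℝ → ℝ) (C : Set ℝ) : ℝ :=
  variance (unifSq[indC C | MeasurableSpace.comap X inferInstance]) unifSq /
    variance (indC C) unifSq

namespace SobolAux

noncomputable def nu : Measure ℝ := volume.restrict (Icc (-1:ℝ) 1)

lemma unifSq_eq : unifSq = (4 : ENNReal)⁻¹ • (nu.prod nu) := rfl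

instance : IsFiniteMeasure nu := by
  unfold nu; infer_instance

lemma nu_univ : nu univ = 2 := by
  simp only [nu, Measure.restrict_apply MeasurableSet.univ, univ_inter, Real.volume_Icc]
  norm_num

lemma nu_Ici : nu (Ici 0) = 1 := by
  have h : Ici (0:ℝ) ∩ Icc (-1:ℝ) 1 = Icc (0:ℝ) 1 := by
    ext x
    simp only [mem_inter_iff, mem_Ici, mem_Icc]
    constructor
    · rintro ⟨h1, h2, h3⟩; exact ⟨h1, h3⟩
    · rintro ⟨h1, h2⟩; exact ⟨h1, by linarith, h2⟩
  rw [nu, Measure.restrict_apply measurableSet_Ici, h, Real.volume_Icc]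
  norm_num

lemma nu_Iio : nu (Iio 0) = 1 := by
  have h : Iio (0:ℝ) ∩ Icc (-1:ℝ) 1 = Ico (-1:ℝ) 0 := by
    ext x
    simp only [mem_inter_iff, mem_Iio, mem_Icc, mem_Ico]
    constructor
    · rintro ⟨h1, h2, h3⟩; exact ⟨h2, h1⟩
    · rintro ⟨h1, h2⟩; exact ⟨h2, h1, by linarith⟩
  rw [nu, Measure.restrict_apply measurableSet_Iio, h, Real.volume_Ico]
  norm_num

instance : IsProbabilityMeasure unifSq := by
  constructor
  rw [unifSq_eq, Measure.smul_apply, smul_eq_mul, ← univ_prod_univ, Measure.prod_prod, nu_univ]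
  norm_num
  exact ENNReal.inv_mul_cancel (by norm_num) (by norm_num)


noncomputable def S1 (C : Set ℝ) : Set ℝ := abs ⁻¹' C

noncomputable def S2 (C : Set ℝ) : Set ℝ := (fun y : ℝ => -|y|) ⁻¹' C

lemma measurableSet_S1 {C : Set ℝ} (hC : MeasurableSet C) : MeasurableSet (S1 C) :=
  hC.preimage measurable_abs

lemma measurableSet_S2 {C : Set ℝ} (hC : MeasurableSet C) : MeasurableSet (S2 C) :=
  hC.preimage measurable_abs.neg

lemma measurable_sgn : Measurable sgn :=
  Measurable.ite measurableSet_Ici measurable_const measurable_const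

lemma measurable_Ymod : Measurable Ymod :=
  (measurable_sgn.comp measurable_fst).mul measurable_snd.abs

lemma Ymod_preimage (C : Set ℝ) :
    Ymod ⁻¹' C = (Ici (0:ℝ) ×ˢ S1 C) ∪ (Iio (0:ℝ) ×ˢ S2 C) := by
  ext ω
  by_cases h : 0 ≤ ω.1
  · simp [Ymod, sgn, h, S1, S2, not_lt.mpr h, Set.mem_prod]
  · simp [Ymod, sgn, h, S1, S2, not_le.mp h, Set.mem_prod]

lemma indC_eq (C : Set ℝ) : indC C = (Ymod ⁻¹' C).indicator 1 := by
  funext ω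
  by_cases h : Ymod ω ∈ C <;> simp [indC, Set.indicator_apply, h]

lemma unifSq_union_prod {a b : Set ℝ} (ha : MeasurableSet a) (hb : MeasurableSet b) :
    (unifSq (Ici 0 ×ˢ a ∪ Iio 0 ×ˢ b)).toReal = ((nu a).toReal + (nu b).toReal) / 4 := by
  have hdisj : Disjoint (Ici (0:ℝ) ×ˢ a) (Iio (0:ℝ) ×ˢ b) := by
    refine Set.disjoint_left.mpr ?_
    rintro ω ⟨h1, _⟩ ⟨h2, _⟩
    simp only [mem_Ici] at h1
    simp only [mem_Iio] at h2
    linarith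
  rw [unifSq_eq, Measure.smul_apply, smul_eq_mul,
    measure_union hdisj ((measurableSet_Iio).prod hb),
    Measure.prod_prod, Measure.prod_prod, nu_Ici, nu_Iio, one_mul, one_mul,
    ENNReal.toReal_mul, ENNReal.toReal_add (measure_ne_top nu a) (measure_ne_top nu b)]
  norm_num
  ring

lemma unifSq_snd_preimage {s : Set ℝ} (hs : MeasurableSet s) :
    (unifSq (Prod.snd ⁻¹' s)).toReal = (nu s).toReal / 2 := by
  have h : (Prod.snd ⁻¹' s : Set (ℝ × ℝ)) = univ ×ˢ s := by
    ext ω; simp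
  rw [unifSq_eq, Measure.smul_apply, smul_eq_mul, h, Measure.prod_prod, nu_univ,
    ENNReal.toReal_mul, ENNReal.toReal_mul, ENNReal.toReal_ofNat]
  norm_num
  ring


noncomputable def condG (C : Set ℝ) (ω : ℝ × ℝ) : ℝ :=
  ((S1 C).indicator 1 ω.2 + (S2 C).indicator 1 ω.2) / 2

lemma indicator_snd (S : Set ℝ) :
    (fun ω : ℝ × ℝ => (S.indicator 1 ω.2 : ℝ)) = (Prod.snd ⁻¹' S).indicator 1 := by
  funext ω
  by_cases h : ω.2 ∈ S <;> simp [Set.indicator_apply, h]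

lemma setIntegral_indicator_snd {S t : Set ℝ} (hS : MeasurableSet S) (ht : MeasurableSet t) :
    ∫ ω in Prod.snd ⁻¹' t, (S.indicator 1 ω.2 : ℝ) ∂unifSq = (nu (S ∩ t)).toReal / 2 := by
  rw [indicator_snd, setIntegral_indicator (hS.preimage measurable_snd)]
  simp only [Pi.one_apply]
  rw [setIntegral_const, ← Set.preimage_inter, smul_eq_mul, mul_one, measureReal_def,
    unifSq_snd_preimage (ht.inter hS), Set.inter_comm]

lemma setIntegral_indC {C : Set ℝ} (hC : MeasurableSet C) {t : Set ℝ} (ht : MeasurableSet t) :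
    ∫ ω in Prod.snd ⁻¹' t, indC C ω ∂unifSq
      = ((nu (S1 C ∩ t)).toReal + (nu (S2 C ∩ t)).toReal) / 4 := by
  have hset : Prod.snd ⁻¹' t ∩ (Ici (0:ℝ) ×ˢ S1 C ∪ Iio (0:ℝ) ×ˢ S2 C)
      = Ici (0:ℝ) ×ˢ (S1 C ∩ t) ∪ Iio (0:ℝ) ×ˢ (S2 C ∩ t) := by
    ext ω
    simp only [mem_inter_iff, mem_preimage, mem_union, Set.mem_prod]
    tauto
  rw [indC_eq, Ymod_preimage,
    setIntegral_indicator (((measurableSet_Ici).prod (measurableSet_S1 hC)).union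
      ((measurableSet_Iio).prod (measurableSet_S2 hC))),
    hset]
  simp only [Pi.one_apply]
  rw [setIntegral_const, smul_eq_mul, mul_one, measureReal_def,
    unifSq_union_prod ((measurableSet_S1 hC).inter ht) ((measurableSet_S2 hC).inter ht)]


lemma integrable_indicator_snd {S : Set ℝ} (hS : MeasurableSet S) :
    Integrable (fun ω : ℝ × ℝ => (S.indicator 1 ω.2 : ℝ)) unifSq := by
  rw [indicator_snd]
  exact (integrable_const (1:ℝ)).indicator (hS.preimage measurable_snd)

lemma integrable_condG {C : Set ℝ} (hC : MeasurableSet C) : Integrable (condG C) unifSq := by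
  have : condG C = fun ω => ((S1 C).indicator 1 ω.2 + (S2 C).indicator 1 ω.2) / 2 := rfl
  rw [this]
  exact ((integrable_indicator_snd (measurableSet_S1 hC)).add
    (integrable_indicator_snd (measurableSet_S2 hC))).div_const 2

lemma setIntegral_condG {C : Set ℝ} (hC : MeasurableSet C) {t : Set ℝ} (ht : MeasurableSet t) :
    ∫ ω in Prod.snd ⁻¹' t, condG C ω ∂unifSq
      = ((nu (S1 C ∩ t)).toReal + (nu (S2 C ∩ t)).toReal) / 4 := by
  have hi1 : IntegrableOn (fun ω : ℝ × ℝ => ((S1 C).indicator 1 ω.2 : ℝ))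
      (Prod.snd ⁻¹' t) unifSq :=
    (integrable_indicator_snd (measurableSet_S1 hC)).integrableOn
  have hi2 : IntegrableOn (fun ω : ℝ × ℝ => ((S2 C).indicator 1 ω.2 : ℝ))
      (Prod.snd ⁻¹' t) unifSq :=
    (integrable_indicator_snd (measurableSet_S2 hC)).integrableOn
  calc ∫ ω in Prod.snd ⁻¹' t, condG C ω ∂unifSq
      = (∫ ω in Prod.snd ⁻¹' t,
          (((S1 C).indicator 1 ω.2 : ℝ) + (S2 C).indicator 1 ω.2) ∂unifSq) / 2 := by
        rw [← integral_div]; rfl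
    _ = ((nu (S1 C ∩ t)).toReal / 2 + (nu (S2 C ∩ t)).toReal / 2) / 2 := by
        rw [integral_add hi1 hi2, setIntegral_indicator_snd (measurableSet_S1 hC) ht,
          setIntegral_indicator_snd (measurableSet_S2 hC) ht]
    _ = _ := by ring


lemma condexp_indC {C : Set ℝ} (hC : MeasurableSet C) :
    unifSq[indC C | MeasurableSpace.comap Prod.snd inferInstance] =ᵐ[unifSq] condG C := by
  have hm : MeasurableSpace.comap (Prod.snd : ℝ × ℝ → ℝ) inferInstance
      ≤ (inferInstance : MeasurableSpace (ℝ × ℝ)) := measurable_snd.comap_le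
  have hf : Integrable (indC C) unifSq := by
    rw [indC_eq]
    exact (integrable_const (1:ℝ)).indicator (measurable_Ymod hC)
  have hsnd : @Measurable (ℝ × ℝ) ℝ (MeasurableSpace.comap Prod.snd inferInstance) _
      Prod.snd := fun t ht => ⟨t, ht, rfl⟩
  have hg : Measurable (fun y : ℝ => (((S1 C).indicator 1 y : ℝ) + (S2 C).indicator 1 y) / 2) :=
    ((measurable_const.indicator (measurableSet_S1 hC)).add
      (measurable_const.indicator (measurableSet_S2 hC))).div_const 2
  have hgm : AEStronglyMeasurable[MeasurableSpace.comap Prod.snd inferInstance]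
      (condG C) unifSq := by
    have : @Measurable (ℝ × ℝ) ℝ (MeasurableSpace.comap Prod.snd inferInstance) _ (condG C) :=
      hg.comp hsnd
    exact StronglyMeasurable.aestronglyMeasurable (this.stronglyMeasurable)
  refine (ae_eq_condExp_of_forall_setIntegral_eq hm hf ?_ ?_ hgm).symm
  · exact fun s _ _ => (integrable_condG hC).integrableOn
  · rintro s ⟨t, ht, rfl⟩ _
    rw [setIntegral_condG hC ht, setIntegral_indC hC ht]

lemma variance_congr {α : Type*} {m : MeasurableSpace α} {μ : Measure α} {f g : α → ℝ}
    (h : f =ᵐ[μ] g) : variance f μ = variance g μ := by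
  unfold variance evariance
  rw [integral_congr_ae h]
  exact congrArg ENNReal.toReal (lintegral_congr_ae (h.mono fun x hx => by simp only []; rw [hx]))


lemma integral_indC {C : Set ℝ} (hC : MeasurableSet C) :
    ∫ ω, indC C ω ∂unifSq = ((nu (S1 C)).toReal + (nu (S2 C)).toReal) / 4 := by
  have h := setIntegral_indC hC MeasurableSet.univ
  simpa [Measure.restrict_univ] using h

lemma integral_condG {C : Set ℝ} (hC : MeasurableSet C) :
    ∫ ω, condG C ω ∂unifSq = ((nu (S1 C)).toReal + (nu (S2 C)).toReal) / 4 := by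
  have h := setIntegral_condG hC MeasurableSet.univ
  simpa [Measure.restrict_univ] using h

lemma integral_indicator_snd' {S : Set ℝ} (hS : MeasurableSet S) :
    ∫ ω, (S.indicator 1 ω.2 : ℝ) ∂unifSq = (nu S).toReal / 2 := by
  have h := setIntegral_indicator_snd hS MeasurableSet.univ
  simpa [Measure.restrict_univ] using h

lemma sq_indC (C : Set ℝ) : (indC C) ^ 2 = indC C := by
  funext ω
  by_cases h : Ymod ω ∈ C <;> simp [indC, Set.indicator_apply, h]

lemma sq_condG (C : Set ℝ) :
    (condG C) ^ 2 = fun ω : ℝ × ℝ =>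
      (((S1 C).indicator 1 ω.2 : ℝ) + (S2 C).indicator 1 ω.2
        + 2 * ((S1 C ∩ S2 C).indicator 1 ω.2)) / 4 := by
  funext ω
  simp only [Pi.pow_apply, condG]
  by_cases h1 : ω.2 ∈ S1 C <;> by_cases h2 : ω.2 ∈ S2 C <;>
    simp [Set.indicator_apply, h1, h2, Set.mem_inter_iff] <;> norm_num

lemma integral_sq_condG {C : Set ℝ} (hC : MeasurableSet C) :
    ∫ ω, ((condG C) ^ 2) ω ∂unifSq
      = ((nu (S1 C)).toReal + (nu (S2 C)).toReal + 2 * (nu (S1 C ∩ S2 C)).toReal) / 8 := by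
  rw [sq_condG]
  have hi1 := integrable_indicator_snd (measurableSet_S1 hC)
  have hi2 := integrable_indicator_snd (measurableSet_S2 hC)
  have hi3 := integrable_indicator_snd ((measurableSet_S1 hC).inter (measurableSet_S2 hC))
  have hi12 : Integrable (fun ω : ℝ × ℝ =>
      ((S1 C).indicator 1 ω.2 : ℝ) + (S2 C).indicator 1 ω.2) unifSq := hi1.add hi2
  have hi3' : Integrable (fun ω : ℝ × ℝ =>
      2 * ((S1 C ∩ S2 C).indicator 1 ω.2 : ℝ)) unifSq := hi3.const_mul 2
  rw [integral_div, integral_add hi12 hi3', integral_add hi1 hi2,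
    integral_const_mul, integral_indicator_snd' (measurableSet_S1 hC),
    integral_indicator_snd' (measurableSet_S2 hC),
    integral_indicator_snd' ((measurableSet_S1 hC).inter (measurableSet_S2 hC))]
  ring

lemma memLp_indC {C : Set ℝ} (hC : MeasurableSet C) : MemLp (indC C) 2 unifSq := by
  have hf : Integrable (indC C) unifSq := by
    rw [indC_eq]
    exact (integrable_const (1:ℝ)).indicator (measurable_Ymod hC)
  refine MemLp.of_bound hf.aestronglyMeasurable 1 (ae_of_all _ fun ω => ?_)
  by_cases h : Ymod ω ∈ C <;> simp [indC, Set.indicator_apply, h]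

lemma memLp_condG {C : Set ℝ} (hC : MeasurableSet C) : MemLp (condG C) 2 unifSq := by
  refine MemLp.of_bound (integrable_condG hC).aestronglyMeasurable 1 (ae_of_all _ fun ω => ?_)
  simp only [condG]
  by_cases h1 : ω.2 ∈ S1 C <;> by_cases h2 : ω.2 ∈ S2 C <;>
    simp [Set.indicator_apply, h1, h2, Real.norm_eq_abs, abs_div] <;> norm_num

lemma SIdx_formula {C : Set ℝ} (hC : MeasurableSet C) :
    SIdx Prod.snd C =
      (((nu (S1 C)).toReal + (nu (S2 C)).toReal + 2 * (nu (S1 C ∩ S2 C)).toReal) / 8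
        - (((nu (S1 C)).toReal + (nu (S2 C)).toReal) / 4) ^ 2)
      / (((nu (S1 C)).toReal + (nu (S2 C)).toReal) / 4
        - (((nu (S1 C)).toReal + (nu (S2 C)).toReal) / 4) ^ 2) := by
  unfold SIdx
  rw [variance_congr (condexp_indC hC), variance_eq_sub (memLp_condG hC),
    variance_eq_sub (memLp_indC hC)]
  rw [show (∫ ω, ((condG C) ^ 2) ω ∂unifSq) = _ from integral_sq_condG hC,
    sq_indC, integral_condG hC, integral_indC hC]


lemma nu_Icc_toReal {a b : ℝ} (ha : -1 ≤ a) (hb : b ≤ 1) (hab : a ≤ b) :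
    (nu (Icc a b)).toReal = b - a := by
  rw [nu, Measure.restrict_apply measurableSet_Icc,
    Set.inter_eq_left.mpr (Icc_subset_Icc ha hb), Real.volume_Icc,
    ENNReal.toReal_ofReal (by linarith)]

-- Case y1 ≤ 0 ≤ y2
lemma S1_caseC {y1 y2 : ℝ} (h1' : y1 ≤ 0) : S1 (Icc y1 y2) = Icc (-y2) y2 := by
  ext y
  simp only [S1, mem_preimage, mem_Icc]
  constructor
  · rintro ⟨_, h⟩
    exact abs_le.mp h
  · intro h
    exact ⟨le_trans h1' (abs_nonneg y), abs_le.mpr h⟩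

lemma S2_caseC {y1 y2 : ℝ} (h2' : 0 ≤ y2) : S2 (Icc y1 y2) = Icc y1 (-y1) := by
  ext y
  simp only [S2, mem_preimage, mem_Icc]
  constructor
  · rintro ⟨h, _⟩
    have := abs_le.mp (by linarith [neg_le_neg h] : |y| ≤ -y1)
    exact ⟨by linarith [this.1], this.2⟩
  · intro h
    have habs : |y| ≤ -y1 := abs_le.mpr ⟨by linarith [h.1], h.2⟩
    exact ⟨by linarith, by linarith [abs_nonneg y]⟩

lemma caseC_s1 {y1 y2 : ℝ} (h1' : y1 ≤ 0) (h2' : 0 ≤ y2) (hb : y2 ≤ 1) :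
    (nu (S1 (Icc y1 y2))).toReal = 2 * y2 := by
  rw [S1_caseC h1', nu_Icc_toReal (by linarith) hb (by linarith)]
  ring

lemma caseC_s2 {y1 y2 : ℝ} (h1 : -1 ≤ y1) (h1' : y1 ≤ 0) (h2' : 0 ≤ y2) :
    (nu (S2 (Icc y1 y2))).toReal = -(2 * y1) := by
  rw [S2_caseC h2', nu_Icc_toReal h1 (by linarith) (by linarith)]
  ring

lemma caseC_s3 {y1 y2 : ℝ} (h1 : -1 ≤ y1) (h1' : y1 ≤ 0) (h2' : 0 ≤ y2) (hb : y2 ≤ 1) :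
    (nu (S1 (Icc y1 y2) ∩ S2 (Icc y1 y2))).toReal = 2 * min y2 (-y1) := by
  rw [S1_caseC h1', S2_caseC h2', Icc_inter_Icc]
  have hmax : max (-y2) y1 = -(min y2 (-y1)) := by
    rcases le_total y2 (-y1) with h | h
    · rw [min_eq_left h, max_eq_left (by linarith)]
    · rw [min_eq_right h, max_eq_right (by linarith), neg_neg]
  have hmin : 0 ≤ min y2 (-y1) := le_min h2' (by linarith)
  rw [hmax,
    nu_Icc_toReal (by linarith [min_le_left y2 (-y1)])
      (le_trans (min_le_left _ _) hb) (by linarith)]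
  ring

-- Case y2 < 0
lemma S1_caseA {y1 y2 : ℝ} (h2'' : y2 < 0) : S1 (Icc y1 y2) = ∅ := by
  ext y
  simp only [S1, mem_preimage, mem_Icc, mem_empty_iff_false, iff_false, not_and]
  intro _
  intro h
  linarith [abs_nonneg y]

lemma S2_caseA {y1 y2 : ℝ} (h2'' : y2 < 0) :
    S2 (Icc y1 y2) = Icc y1 y2 ∪ Icc (-y2) (-y1) := by
  ext y
  simp only [S2, mem_preimage, mem_Icc, mem_union]
  rcases le_total 0 y with hy | hy
  · rw [abs_of_nonneg hy]
    constructor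
    · rintro ⟨ha, hb⟩; right; constructor <;> linarith
    · rintro (⟨ha, hb⟩ | ⟨ha, hb⟩) <;> constructor <;> linarith
  · rw [abs_of_nonpos hy]
    constructor
    · rintro ⟨ha, hb⟩; left; constructor <;> linarith
    · rintro (⟨ha, hb⟩ | ⟨ha, hb⟩) <;> constructor <;> linarith

lemma caseA_s2 {y1 y2 : ℝ} (h1 : -1 ≤ y1) (h12 : y1 < y2) (h2'' : y2 < 0) :
    (nu (S2 (Icc y1 y2))).toReal = 2 * (y2 - y1) := by
  rw [S2_caseA h2'']
  have hdisj : Disjoint (Icc y1 y2) (Icc (-y2) (-y1)) := by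
    refine Set.disjoint_left.mpr ?_
    rintro y hy hy'
    simp only [mem_Icc] at hy hy'
    linarith [hy.2, hy'.1]
  rw [measure_union hdisj measurableSet_Icc,
    ENNReal.toReal_add (measure_ne_top _ _) (measure_ne_top _ _),
    nu_Icc_toReal h1 (by linarith) (le_of_lt h12),
    nu_Icc_toReal (by linarith) (by linarith) (by linarith)]
  ring

-- Case 0 < y1
lemma S2_caseB {y1 y2 : ℝ} (h1'' : 0 < y1) : S2 (Icc y1 y2) = ∅ := by
  ext y
  simp only [S2, mem_preimage, mem_Icc, mem_empty_iff_false, iff_false, not_and]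
  intro h
  intro _
  linarith [abs_nonneg y]

lemma S1_caseB {y1 y2 : ℝ} (h1'' : 0 < y1) :
    S1 (Icc y1 y2) = Icc (-y2) (-y1) ∪ Icc y1 y2 := by
  ext y
  simp only [S1, mem_preimage, mem_Icc, mem_union]
  rcases le_total 0 y with hy | hy
  · rw [abs_of_nonneg hy]
    constructor
    · rintro ⟨ha, hb⟩; right; constructor <;> linarith
    · rintro (⟨ha, hb⟩ | ⟨ha, hb⟩) <;> constructor <;> linarith
  · rw [abs_of_nonpos hy]
    constructor
    · rintro ⟨ha, hb⟩; left; constructor <;> linarith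
    · rintro (⟨ha, hb⟩ | ⟨ha, hb⟩) <;> constructor <;> linarith

lemma caseB_s1 {y1 y2 : ℝ} (h1'' : 0 < y1) (h12 : y1 < y2) (h2 : y2 ≤ 1) :
    (nu (S1 (Icc y1 y2))).toReal = 2 * (y2 - y1) := by
  rw [S1_caseB h1'']
  have hdisj : Disjoint (Icc (-y2) (-y1)) (Icc y1 y2) := by
    refine Set.disjoint_left.mpr ?_
    rintro y hy hy'
    simp only [mem_Icc] at hy hy'
    linarith [hy.2, hy'.1]
  rw [measure_union hdisj measurableSet_Icc,
    ENNReal.toReal_add (measure_ne_top _ _) (measure_ne_top _ _),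
    nu_Icc_toReal (by linarith) (by linarith) (by linarith),
    nu_Icc_toReal (by linarith) h2 (le_of_lt h12)]
  ring


lemma key (y1 y2 m : ℝ) (hd0 : 0 < y2 - y1) (hd2 : y2 - y1 < 2)
    (hs : (nu (S1 (Icc y1 y2))).toReal + (nu (S2 (Icc y1 y2))).toReal = 2 * (y2 - y1))
    (hs3 : (nu (S1 (Icc y1 y2) ∩ S2 (Icc y1 y2))).toReal = 2 * m) :
    SIdx Prod.snd (Icc y1 y2)
      = (1 - y2 + y1) / (2 - y2 + y1) + 2 * m / ((y2 - y1) * (2 - y2 + y1)) := by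
  rw [SIdx_formula measurableSet_Icc, hs, hs3]
  have hA : y2 - y1 ≠ 0 := ne_of_gt hd0
  have hB : 2 - y2 + y1 ≠ 0 := by intro h; apply hd2.ne; linarith
  have hD : (0:ℝ) < 2 * (y2 - y1) / 4 - (2 * (y2 - y1) / 4) ^ 2 := by
    have he : 2 * (y2 - y1) / 4 - (2 * (y2 - y1) / 4) ^ 2
        = (y2 - y1) * (2 - (y2 - y1)) / 4 := by ring
    rw [he]
    have := mul_pos hd0 (by linarith : (0:ℝ) < 2 - (y2 - y1))
    linarith
  rw [div_eq_iff (ne_of_gt hD)]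
  field_simp
  ring

end SobolAux

theorem stmt12 (y1 y2 : ℝ) (h1 : -1 ≤ y1) (h12 : y1 < y2) (h2 : y2 ≤ 1)
    (hne : (y1, y2) ≠ (-1, 1)) :
    ((y2 ≤ 0 ∨ 0 ≤ y1) →
      SIdx Prod.snd (Icc y1 y2) = (1 - y2 + y1) / (2 - y2 + y1)) ∧
    (y1 ≤ 0 → 0 ≤ y2 →
      SIdx Prod.snd (Icc y1 y2)
        = (1 - y2 + y1) / (2 - y2 + y1)
          + 2 * min |y1| y2 / ((y2 - y1) * (2 - y2 + y1))) := by
  have hd0 : 0 < y2 - y1 := by linarith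
  have hd2 : y2 - y1 < 2 := by
    by_contra h
    push_neg at h
    have e1 : y1 = -1 := by linarith
    have e2 : y2 = 1 := by linarith
    exact hne (by rw [e1, e2])
  constructor
  · rintro (hc | hc)
    · rcases lt_or_eq_of_le hc with hlt | heq
      · have h := SobolAux.key y1 y2 0 hd0 hd2 ?_ ?_
        · simpa using h
        · rw [SobolAux.S1_caseA hlt, SobolAux.caseA_s2 h1 h12 hlt]
          simp
        · rw [SobolAux.S1_caseA hlt]
          simp
      · subst heq
        have h1' : y1 ≤ 0 := le_of_lt h12
        have h := SobolAux.key y1 0 0 hd0 hd2 ?_ ?_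
        · simpa using h
        · rw [SobolAux.caseC_s1 h1' le_rfl (by norm_num),
            SobolAux.caseC_s2 h1 h1' le_rfl]
          ring
        · rw [SobolAux.caseC_s3 h1 h1' le_rfl (by norm_num),
            min_eq_left (by linarith : (0:ℝ) ≤ -y1)]
    · rcases lt_or_eq_of_le hc with hlt | heq
      · have h := SobolAux.key y1 y2 0 hd0 hd2 ?_ ?_
        · simpa using h
        · rw [SobolAux.S2_caseB hlt, SobolAux.caseB_s1 hlt h12 h2]
          simp
        · rw [SobolAux.S2_caseB hlt]
          simp
      · subst heq
        have h2' : (0:ℝ) ≤ y2 := le_of_lt h12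
        have h := SobolAux.key 0 y2 0 hd0 hd2 ?_ ?_
        · simpa using h
        · rw [SobolAux.caseC_s1 le_rfl h2' h2, SobolAux.caseC_s2 (by norm_num) le_rfl h2']
          ring
        · rw [SobolAux.caseC_s3 (by norm_num) le_rfl h2' h2]
          rw [show -(0:ℝ) = 0 from neg_zero, min_eq_right h2']
  · intro hy1 hy2
    have h := SobolAux.key y1 y2 (min y2 (-y1)) hd0 hd2 ?_ ?_
    · rw [abs_of_nonpos hy1, min_comm (-y1) y2]
      exact h
    · rw [SobolAux.caseC_s1 hy1 hy2 h2, SobolAux.caseC_s2 h1 hy1 hy2]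
      ring
    · exact SobolAux.caseC_s3 h1 hy1 hy2 h2
end

section
/- For every δ ∈ (0,1), the symmetric region C(-δ, δ) = [-δ, δ] satisfies SI_2^{C(-δ,δ)} = 1 and SI_1^{C(-δ,δ)} = 0; that is, the partition ([-δ,δ], [-1,-δ]∪[δ,1]) of the output space is fully explained by the variations of X2 and not at all by X1. -/
open MeasureTheory ProbabilityTheory Set

/-! ### Auxiliary material -/

/-- The uniform probability measure on `[-1,1]`. -/
noncomputable def Pm : Measure ℝ := (2 : ENNReal)⁻¹ • volume.restrict (Icc (-1 : ℝ) 1)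

instance : IsProbabilityMeasure Pm := by
  constructor
  simp [Pm, Real.volume_Icc]
  rw [show (1 : ℝ) + 1 = 2 by ring, ENNReal.ofReal_ofNat]
  exact ENNReal.inv_mul_cancel (by norm_num) (by norm_num)

lemma unifSq_eq : unifSq = Pm.prod Pm := by
  refine (Measure.prod_eq fun s t hs ht => ?_).symm
  simp only [unifSq, Measure.smul_apply, smul_eq_mul, Measure.prod_prod, Pm]
  rw [show (4 : ENNReal)⁻¹ = 2⁻¹ * 2⁻¹ by
    rw [← ENNReal.mul_inv (by norm_num) (by norm_num)]; norm_num]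
  ring

instance : IsProbabilityMeasure unifSq := by
  rw [unifSq_eq]; infer_instance

lemma Pm_Icc {δ : ℝ} (hδ0 : 0 < δ) (hδ1 : δ < 1) :
    Pm (Icc (-δ) δ) = ENNReal.ofReal δ := by
  have hsub : Icc (-δ) δ ⊆ Icc (-1 : ℝ) 1 :=
    Icc_subset_Icc (by linarith) (by linarith)
  simp only [Pm, Measure.smul_apply, smul_eq_mul, Measure.restrict_apply measurableSet_Icc,
    inter_eq_self_of_subset_left hsub, Real.volume_Icc]
  rw [show δ - -δ = 2 * δ by ring, ENNReal.ofReal_mul (by norm_num),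
    ENNReal.ofReal_ofNat, ← mul_assoc,
    ENNReal.inv_mul_cancel (by norm_num) (by norm_num), one_mul]

section Main

variable {δ : ℝ}

lemma indC_eq (hδ0 : 0 < δ) :
    indC (Icc (-δ) δ) = (Prod.snd ⁻¹' Icc (-δ) δ).indicator (fun _ => (1 : ℝ)) := by
  funext ω
  have hmem : Ymod ω ∈ Icc (-δ) δ ↔ ω.2 ∈ Icc (-δ) δ := by
    have habs : |Ymod ω| = |ω.2| := by
      unfold Ymod sgn
      split_ifs <;> simp [abs_mul]
    rw [mem_Icc, ← abs_le, habs, abs_le, ← mem_Icc]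
  unfold indC
  by_cases h : ω.2 ∈ Icc (-δ) δ
  · rw [indicator_of_mem (hmem.mpr h), indicator_of_mem (by exact h)]
    rfl
  · rw [indicator_of_notMem (fun hc => h (hmem.mp hc)),
      indicator_of_notMem (by exact h)]

lemma measA : MeasurableSet (Prod.snd ⁻¹' Icc (-δ) δ : Set (ℝ × ℝ)) :=
  measurable_snd measurableSet_Icc

lemma unifSq_A (hδ0 : 0 < δ) (hδ1 : δ < 1) :
    unifSq (Prod.snd ⁻¹' Icc (-δ) δ) = ENNReal.ofReal δ := by
  rw [unifSq_eq, ← Set.univ_prod, Measure.prod_prod, measure_univ, one_mul,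
    Pm_Icc hδ0 hδ1]

lemma integral_indC (hδ0 : 0 < δ) (hδ1 : δ < 1) :
    ∫ ω, indC (Icc (-δ) δ) ω ∂unifSq = δ := by
  rw [indC_eq hδ0, integral_indicator_const _ measA, measureReal_def, unifSq_A hδ0 hδ1,
    ENNReal.toReal_ofReal hδ0.le]
  simp

lemma memLp_indC (hδ0 : 0 < δ) : MemLp (indC (Icc (-δ) δ)) 2 unifSq := by
  rw [indC_eq hδ0]
  exact memLp_indicator_const 2 measA 1 (Or.inr (measure_ne_top _ _))

lemma variance_indC (hδ0 : 0 < δ) (hδ1 : δ < 1) :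
    variance (indC (Icc (-δ) δ)) unifSq = δ - δ ^ 2 := by
  rw [variance_eq_sub (memLp_indC hδ0)]
  have hsq : (indC (Icc (-δ) δ)) ^ 2 = indC (Icc (-δ) δ) := by
    funext ω
    rw [indC_eq hδ0]
    by_cases h : ω ∈ Prod.snd ⁻¹' Icc (-δ) δ <;> simp [h]
  rw [hsq, integral_indC hδ0 hδ1]

lemma sm_indC (hδ0 : 0 < δ) :
    StronglyMeasurable[MeasurableSpace.comap (Prod.snd : ℝ × ℝ → ℝ) inferInstance]
      (indC (Icc (-δ) δ)) := by
  rw [indC_eq hδ0]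
  have h2 : Measurable[MeasurableSpace.comap (Prod.snd : ℝ × ℝ → ℝ) inferInstance]
      (Prod.snd : ℝ × ℝ → ℝ) := Measurable.of_comap_le le_rfl
  have : Measurable[MeasurableSpace.comap (Prod.snd : ℝ × ℝ → ℝ) inferInstance]
      ((Prod.snd ⁻¹' Icc (-δ) δ).indicator (fun _ => (1 : ℝ))) := by
    exact (measurable_const.indicator (h2 measurableSet_Icc))
  exact this.stronglyMeasurable

lemma indep_snd_fst :
    ProbabilityTheory.Indep
      (MeasurableSpace.comap (Prod.snd : ℝ × ℝ → ℝ) inferInstance)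
      (MeasurableSpace.comap (Prod.fst : ℝ × ℝ → ℝ) inferInstance) unifSq := by
  rw [ProbabilityTheory.Indep_iff]
  rintro t1 t2 ⟨s, hs, rfl⟩ ⟨t, ht, rfl⟩
  have h1 : (Prod.snd ⁻¹' s : Set (ℝ × ℝ)) ∩ Prod.fst ⁻¹' t = t ×ˢ s := by
    ext ω; simp [Set.mem_prod, and_comm]
  rw [h1, unifSq_eq, Measure.prod_prod, ← Set.univ_prod, ← Set.prod_univ,
    Measure.prod_prod, Measure.prod_prod, measure_univ]
  ring

theorem stmt13 (δ : ℝ) (hδ : δ ∈ Ioo (0 : ℝ) 1) :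
    SIdx Prod.snd (Icc (-δ) δ) = 1 ∧ SIdx Prod.fst (Icc (-δ) δ) = 0 := by
  obtain ⟨hδ0, hδ1⟩ := hδ
  have hvar : variance (indC (Icc (-δ) δ)) unifSq = δ - δ ^ 2 := variance_indC hδ0 hδ1
  have hvar_ne : variance (indC (Icc (-δ) δ)) unifSq ≠ 0 := by
    rw [hvar]; nlinarith
  have hle : MeasurableSpace.comap (Prod.snd : ℝ × ℝ → ℝ) inferInstance ≤
      (inferInstance : MeasurableSpace (ℝ × ℝ)) := measurable_snd.comap_le
  have hle' : MeasurableSpace.comap (Prod.fst : ℝ × ℝ → ℝ) inferInstance ≤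
      (inferInstance : MeasurableSpace (ℝ × ℝ)) := measurable_fst.comap_le
  have hint : Integrable (indC (Icc (-δ) δ)) unifSq := (memLp_indC hδ0).integrable one_le_two
  constructor
  · unfold SIdx
    rw [condExp_of_stronglyMeasurable hle (sm_indC hδ0) hint]
    exact div_self hvar_ne
  · unfold SIdx
    have hcond : unifSq[indC (Icc (-δ) δ) |
        MeasurableSpace.comap (Prod.fst : ℝ × ℝ → ℝ) inferInstance] =ᵐ[unifSq]
        fun _ => ∫ ω, indC (Icc (-δ) δ) ω ∂unifSq :=
      condExp_indep_eq hle hle' (sm_indC hδ0) indep_snd_fst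
    have hvz : variance (unifSq[indC (Icc (-δ) δ) |
        MeasurableSpace.comap (Prod.fst : ℝ × ℝ → ℝ) inferInstance]) unifSq = 0 := by
      set g := unifSq[indC (Icc (-δ) δ) |
        MeasurableSpace.comap (Prod.fst : ℝ × ℝ → ℝ) inferInstance] with hg
      have hmean : ∫ ω, g ω ∂unifSq = ∫ ω, indC (Icc (-δ) δ) ω ∂unifSq := by
        rw [integral_congr_ae hcond, integral_const, probReal_univ]
        simp
      have : evariance g unifSq = 0 := by
        rw [evariance_eq_zero_iff
          (stronglyMeasurable_condExp.mono hle').measurable.aemeasurable]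
        filter_upwards [hcond] with ω hω
        show g ω = ∫ x, g x ∂unifSq
        rw [hω, hmean]
      rw [variance, this, ENNReal.toReal_zero]
    rw [hvz, zero_div]

end Main
end

section
/- Let n ≥ 1, let u, v ∈ ℝ^n, and let N0, H0, H1, θ be real numbers with H0 > 0, H1 > 0, θ > 0 and H0 + (1+θ)H1 < N0. Assume ‖u+v‖^2 > 0 and ‖u+v‖^2 ≥ ((H0+H1)(N0 - (H0+H1)) / (H0(N0 - H0))) · ‖u‖^2. Then ‖u+(1+θ)v‖^2 · (H0+H1)(N0 - (H0+H1)) > ‖u+v‖^2 · (H0+(1+θ)H1)(N0 - (H0+(1+θ)H1)); equivalently, ‖u+(1+θ)v‖^2 / ((H0+(1+θ)H1)(N0 - (H0+(1+θ)H1))) > ‖u+v‖^2 / ((H0+H1)(N0 - (H0+H1))). -/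
/-! Both the squared norm `‖u + t • v‖ ^ 2` and the mass factor `(H0 + t H1) (N0 - H0 - t H1)` are
quadratic in `t`, so each is determined by its values at `t = 0, 1` and its leading coefficient
(`‖v‖ ^ 2`, resp. `-H1 ^ 2`). Cross-multiplying at `t = 1 + θ`, the difference of the two sides is
`θ` times the slack in the hypothesis plus `θ (1 + θ) (‖v‖ ^ 2 g₁ + H1 ^ 2 ‖u + v‖ ^ 2)`, where
`g₁ = (H0 + H1) (N0 - H0 - H1) > 0`; the last term is positive since `‖u + v‖ > 0`. -/

theorem norm_add_smul_sq_eq {E : Type*} [NormedAddCommGroup E] [InnerProductSpace ℝ E]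
    (u v : E) (t : ℝ) :
    ‖u + t • v‖ ^ 2 = (1 - t) * ‖u‖ ^ 2 + t * ‖u + v‖ ^ 2 + t * (t - 1) * ‖v‖ ^ 2 := by
  rw [norm_add_sq_real, norm_add_sq_real, real_inner_smul_right, norm_smul, mul_pow,
    Real.norm_eq_abs, sq_abs]
  ring

theorem stmt15_general (n : ℕ) (u v : EuclideanSpace ℝ (Fin n))
    (N0 H0 H1 θ : ℝ) (hH0 : 0 < H0) (hH1 : 0 < H1) (hθ : 0 < θ)
    (hN : H0 + (1 + θ) * H1 < N0)
    (huv : 0 < ‖u + v‖ ^ 2)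
    (h : ‖u + v‖ ^ 2 ≥ ((H0 + H1) * (N0 - (H0 + H1)) / (H0 * (N0 - H0))) * ‖u‖ ^ 2) :
    ‖u + (1 + θ) • v‖ ^ 2 * ((H0 + H1) * (N0 - (H0 + H1))) >
      ‖u + v‖ ^ 2 * ((H0 + (1 + θ) * H1) * (N0 - (H0 + (1 + θ) * H1))) ∧
    ‖u + (1 + θ) • v‖ ^ 2 / ((H0 + (1 + θ) * H1) * (N0 - (H0 + (1 + θ) * H1))) >
      ‖u + v‖ ^ 2 / ((H0 + H1) * (N0 - (H0 + H1))) := by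
  have hθH1 : 0 < θ * H1 := mul_pos hθ hH1
  have hg0 : 0 < H0 * (N0 - H0) := mul_pos hH0 (by linarith)
  have hg1 : 0 < (H0 + H1) * (N0 - (H0 + H1)) := mul_pos (by linarith) (by linarith)
  have hgθ : 0 < (H0 + (1 + θ) * H1) * (N0 - (H0 + (1 + θ) * H1)) :=
    mul_pos (by positivity) (by linarith)
  have hslack : 0 ≤ ‖u + v‖ ^ 2 * (H0 * (N0 - H0)) - (H0 + H1) * (N0 - (H0 + H1)) * ‖u‖ ^ 2 := by
    rw [ge_iff_le, div_mul_eq_mul_div, div_le_iff₀ hg0] at h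
    linarith
  have hpos : 0 < ‖u + (1 + θ) • v‖ ^ 2 * ((H0 + H1) * (N0 - (H0 + H1))) -
      ‖u + v‖ ^ 2 * ((H0 + (1 + θ) * H1) * (N0 - (H0 + (1 + θ) * H1))) := by
    have hdiff : ‖u + (1 + θ) • v‖ ^ 2 * ((H0 + H1) * (N0 - (H0 + H1))) -
        ‖u + v‖ ^ 2 * ((H0 + (1 + θ) * H1) * (N0 - (H0 + (1 + θ) * H1))) =
        θ * (‖u + v‖ ^ 2 * (H0 * (N0 - H0)) - (H0 + H1) * (N0 - (H0 + H1)) * ‖u‖ ^ 2) +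
        θ * (1 + θ) * (‖v‖ ^ 2 * ((H0 + H1) * (N0 - (H0 + H1))) + H1 ^ 2 * ‖u + v‖ ^ 2) := by
      rw [norm_add_smul_sq_eq]
      ring
    rw [hdiff]
    positivity
  refine ⟨by linarith, ?_⟩
  rw [gt_iff_lt, div_lt_div_iff₀ hg1 hgθ]
  linarith

/-- Key lemma in the proof of Proposition 1: if adding the set of points with
centered histogram `v` (mass `H1`) to the cluster with centered histogram `u`
(mass `H0`) does not decrease the discretized region-based Sobol' index, then
additionally adding a perfectly correlated set (factor `θ`) strictly increases it. -/
theorem stmt15 (n : ℕ) (hn : 1 ≤ n) (u v : EuclideanSpace ℝ (Fin n))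
    (N0 H0 H1 θ : ℝ) (hH0 : 0 < H0) (hH1 : 0 < H1) (hθ : 0 < θ)
    (hN : H0 + (1 + θ) * H1 < N0)
    (huv : 0 < ‖u + v‖ ^ 2)
    (h : ‖u + v‖ ^ 2 ≥ ((H0 + H1) * (N0 - (H0 + H1)) / (H0 * (N0 - H0))) * ‖u‖ ^ 2) :
    ‖u + (1 + θ) • v‖ ^ 2 * ((H0 + H1) * (N0 - (H0 + H1))) >
      ‖u + v‖ ^ 2 * ((H0 + (1 + θ) * H1) * (N0 - (H0 + (1 + θ) * H1))) ∧
    ‖u + (1 + θ) • v‖ ^ 2 / ((H0 + (1 + θ) * H1) * (N0 - (H0 + (1 + θ) * H1))) >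
      ‖u + v‖ ^ 2 / ((H0 + H1) * (N0 - (H0 + H1))) :=
  stmt15_general n u v N0 H0 H1 θ hH0 hH1 hθ hN huv h
end

section
/- Let n_x ≥ 1 and m ≥ 1 be natural numbers and set N = n_x·m. Let Ω be a finite probability space of N equally likely points partitioned into n_x bins of m points each, let X: Ω → {1,...,n_x} map each point to its bin index, and let Z: Ω → {0,1} be such that bin i contains exactly h_i points with Z = 1 (0 ≤ h_i ≤ m). Set S = Σ_{i=1}^{n_x} h_i and assume 0 < S < N. Then Var(E[Z | X]) / Var(Z) = (n_x / (S(N - S))) · Σ_{i=1}^{n_x} (h_i - S/n_x)^2. -/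
/-!
Under the uniform measure on bins × points, `E[Z | X]` is the bin average `h_X / m`, so
`Var(E[Z | X])` is `m⁻²` times the variance of the histogram under the uniform measure on bins,
namely `∑ (h_i - S/n_x)² / n_x`. Being `{0,1}`-valued, `Z` has variance `p (1 - p)` with
`p = S/N`, and `N = n_x m` turns the quotient into the claimed formula.
-/

open MeasureTheory ProbabilityTheory
open scoped ENNReal

lemma variance_eq_mul_one_sub_of_sq_eq_self {Ω : Type*} [MeasurableSpace Ω] {μ : Measure Ω}
    [IsProbabilityMeasure μ] {Z : Ω → ℝ} (hZ : MemLp Z 2 μ) (hZ_sq : ∀ ω, Z ω ^ 2 = Z ω) :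
    variance Z μ = μ[Z] * (1 - μ[Z]) := by
  rw [variance_eq_sub hZ, show Z ^ 2 = Z from funext hZ_sq]
  ring

lemma sum_eq_card_of_forall_eq_zero_or_eq_one {ι : Type*} [Fintype ι] {f : ι → ℝ}
    (hf : ∀ i, f i = 0 ∨ f i = 1) : ∑ i, f i = Nat.card {i // f i = 1} := by
  classical
  rw [Nat.card_eq_fintype_card, Fintype.card_subtype, ← Finset.sum_boole]
  refine Finset.sum_congr rfl fun i _ ↦ ?_
  rcases hf i with h | h <;> simp [h]

section Uniform
variable {Ω : Type*} [Fintype Ω] [MeasurableSpace Ω]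

lemma uniformOn_univ_eq_smul_count :
    uniformOn (Set.univ : Set Ω) = (Fintype.card Ω : ℝ≥0∞)⁻¹ • Measure.count := by
  ext s -
  rw [uniformOn_univ, Measure.smul_apply, smul_eq_mul, ENNReal.div_eq_inv_mul]

variable [MeasurableSingletonClass Ω]

lemma integral_uniformOn_univ (f : Ω → ℝ) :
    ∫ ω, f ω ∂uniformOn Set.univ = (Fintype.card Ω : ℝ)⁻¹ * ∑ ω, f ω := by
  simp [uniformOn_univ_eq_smul_count]

lemma setIntegral_uniformOn_univ (s : Set Ω) (f : Ω → ℝ) :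
    ∫ ω in s, f ω ∂uniformOn Set.univ = (Fintype.card Ω : ℝ)⁻¹ * ∑ ω, s.indicator f ω := by
  rw [← integral_indicator s.toFinite.measurableSet, integral_uniformOn_univ]

lemma variance_uniformOn_univ (f : Ω → ℝ) :
    variance f (uniformOn Set.univ) =
      (Fintype.card Ω : ℝ)⁻¹ * ∑ ω, (f ω - (Fintype.card Ω : ℝ)⁻¹ * ∑ ω', f ω') ^ 2 := by
  rw [variance_eq_integral Measurable.of_discrete.aemeasurable, integral_uniformOn_univ,
    integral_uniformOn_univ]

end Uniform

section Product
variable {α β : Type*} [Fintype α] [Fintype β]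

lemma sum_indicator_preimage_fst (t : Set α) (f : α × β → ℝ) :
    ∑ ω, (Prod.fst ⁻¹' t).indicator f ω = ∑ a, t.indicator (fun a ↦ ∑ b, f (a, b)) a := by
  rw [Fintype.sum_prod_type]
  refine Finset.sum_congr rfl fun a _ ↦ ?_
  by_cases ha : a ∈ t <;> simp [Set.indicator, ha]

variable [MeasurableSpace α] [MeasurableSingletonClass α] [MeasurableSpace β]
  [MeasurableSingletonClass β]

lemma condExp_comap_fst_uniformOn_univ [Nonempty β] (f : α × β → ℝ) :
    (uniformOn Set.univ)[f | MeasurableSpace.comap Prod.fst ‹_›] =ᵐ[uniformOn Set.univ]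
      fun ω ↦ (Fintype.card β : ℝ)⁻¹ * ∑ b, f (ω.1, b) := by
  have hβ : (Fintype.card β : ℝ) ≠ 0 := Nat.cast_ne_zero.mpr Fintype.card_ne_zero
  refine (ae_eq_condExp_of_forall_setIntegral_eq measurable_fst.comap_le .of_finite
    (fun _ _ _ ↦ Integrable.of_finite.integrableOn) ?_ ?_).symm
  · rintro _ ⟨t, -, rfl⟩ -
    simp only [setIntegral_uniformOn_univ, sum_indicator_preimage_fst, Finset.sum_const,
      Finset.card_univ, nsmul_eq_mul, mul_inv_cancel_left₀ hβ]
  · exact ((measurable_of_finite (fun a ↦ (Fintype.card β : ℝ)⁻¹ * ∑ b, f (a, b))).comp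
    (comap_measurable Prod.fst)).aestronglyMeasurable

lemma variance_comp_fst_uniformOn_univ [Nonempty β] (v : α → ℝ) :
    variance (fun ω : α × β ↦ v ω.1) (uniformOn Set.univ) = variance v (uniformOn Set.univ) := by
  have hβ : (Fintype.card β : ℝ) ≠ 0 := Nat.cast_ne_zero.mpr Fintype.card_ne_zero
  simp only [variance_uniformOn_univ, Fintype.card_prod, Fintype.sum_prod_type, Finset.sum_const,
    Finset.card_univ, nsmul_eq_mul, Nat.cast_mul, ← Finset.mul_sum]
  field_simp

end Product

theorem stmt17_general (nx m : ℕ) (N : ℕ) (hN : N = nx * m)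
    (Z : Fin nx × Fin m → ℝ) (hZ : ∀ ω, Z ω = 0 ∨ Z ω = 1)
    (h : Fin nx → ℕ)
    (hcount : ∀ i : Fin nx, Nat.card {j : Fin m // Z (i, j) = 1} = h i)
    (S : ℕ) (hS : S = ∑ i, h i) (hSN : S < N)
    (μ : Measure (Fin nx × Fin m)) (hμ : μ = ((N : ENNReal))⁻¹ • Measure.count) :
    variance (μ[Z | MeasurableSpace.comap Prod.fst inferInstance]) μ / variance Z μ
      = ((nx : ℝ) / ((S : ℝ) * ((N : ℝ) - (S : ℝ)))) *
          ∑ i, ((h i : ℝ) - (S : ℝ) / (nx : ℝ)) ^ 2 := by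
  have hN0 : N ≠ 0 := by omega
  have : NeZero nx := ⟨left_ne_zero_of_mul (hN ▸ hN0)⟩
  have : NeZero m := ⟨right_ne_zero_of_mul (hN ▸ hN0)⟩
  obtain rfl : μ = uniformOn Set.univ := by
    rw [hμ, uniformOn_univ_eq_smul_count, Fintype.card_prod, Fintype.card_fin, Fintype.card_fin, hN,
      Nat.cast_mul]
  have hbin : ∀ i, ∑ j, Z (i, j) = h i := fun i ↦ by
    rw [sum_eq_card_of_forall_eq_zero_or_eq_one fun j ↦ hZ (i, j), hcount]
  have hmean : ∫ ω, Z ω ∂uniformOn Set.univ = S / N := by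
    rw [integral_uniformOn_univ, Fintype.sum_prod_type, Finset.sum_congr rfl fun i _ ↦ hbin i, hS]
    simp [hN, div_eq_inv_mul]
  have hvarZ : variance Z (uniformOn Set.univ) = S * (N - S) / N ^ 2 := by
    rw [variance_eq_mul_one_sub_of_sq_eq_self .of_discrete
      fun ω ↦ by rcases hZ ω with hω | hω <;> simp [hω], hmean]
    field_simp [hN0]
  have hvarCondExp : variance (uniformOn Set.univ)[Z | MeasurableSpace.comap Prod.fst inferInstance]
      (uniformOn Set.univ) = (m : ℝ)⁻¹ ^ 2 * variance (fun i ↦ (h i : ℝ)) (uniformOn Set.univ) := by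
    rw [variance_congr (condExp_comap_fst_uniformOn_univ Z), ← variance_const_mul]
    simp only [Fintype.card_fin, hbin]
    exact variance_comp_fst_uniformOn_univ (fun i ↦ (m : ℝ)⁻¹ * h i)
  rw [hvarCondExp, hvarZ, variance_uniformOn_univ, Fintype.card_fin, ← Nat.cast_sum, ← hS, div_div_eq_mul_div, div_mul_eq_mul_div, hN]
  congr 1
  simp only [Nat.cast_mul, div_eq_inv_mul]
  field_simp [NeZero.ne (m : ℝ)]

/-- Identity expressing the discrete approximation of the first-order
region-based Sobol' index in terms of the histogram `h` of the conditional
distribution of the (uniform, discretized) input given membership in the region.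
The finite probability space is `Fin nx × Fin m`: `nx` bins of `m` equally
likely points each (`N = nx * m` points in total), `X = Prod.fst` is the bin
index and `Z` is the {0,1}-valued membership variable. -/
theorem stmt17 (nx m : ℕ) (hnx : 1 ≤ nx) (hm : 1 ≤ m) (N : ℕ) (hN : N = nx * m)
    (Z : Fin nx × Fin m → ℝ) (hZ : ∀ ω, Z ω = 0 ∨ Z ω = 1)
    (h : Fin nx → ℕ)
    (hcount : ∀ i : Fin nx, Nat.card {j : Fin m // Z (i, j) = 1} = h i)
    (S : ℕ) (hS : S = ∑ i, h i) (hS0 : 0 < S) (hSN : S < N)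
    (μ : Measure (Fin nx × Fin m)) (hμ : μ = ((N : ENNReal))⁻¹ • Measure.count) :
    variance (μ[Z | MeasurableSpace.comap Prod.fst inferInstance]) μ / variance Z μ
      = ((nx : ℝ) / ((S : ℝ) * ((N : ℝ) - (S : ℝ)))) *
          ∑ i, ((h i : ℝ) - (S : ℝ) / (nx : ℝ)) ^ 2 :=
  stmt17_general nx m N hN Z hZ h hcount S hS hSN μ hμ
end

section
/- (Proposition 1) Let n_x ≥ 1, m ≥ 1, N = n_x·m, and K ≥ 3. Let h^1, ..., h^K ∈ ℝ^{n_x} have nonnegative entries, with Σ_{k=1}^{K} h^k_i = m for every bin i ∈ {1,...,n_x} and with total mass S(h^k) = Σ_i h^k_i > 0 for every k. For every nonempty proper subset A ⊆ {1,...,K}, let H^A = Σ_{k∈A} h^k, S_A = Σ_i H^A_i (so 0 < S_A < N), and define S̃I(A) = (n_x / (S_A(N - S_A))) · Σ_{i=1}^{n_x} (H^A_i - S_A/n_x)^2. Suppose k ≠ k' are indices and θ > 0 is such that h^{k'} = θ·h^k. If A* is a nonempty proper subset of {1,...,K} maximizing S̃I over all nonempty proper subsets, and S̃I(A*) > 0,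 then k ∈ A* if and only if k' ∈ A*; i.e., the two elementary clusters with perfectly correlated histograms lie on the same side of the optimal 2-partition. -/
/-!
Write `V(H) = ∑ᵢ (Hᵢ - S/n)²` and `S = ∑ᵢ Hᵢ` for a histogram `H` on `n` bins, so that
`S̃I = n V(H) / (S (N - S))`. If `λ = S̃I(A*)` is the maximum, the slack `λ S (N - S) - n V(H)`
is nonnegative for every union of elementary clusters (for `∅` and for the full union, which is
the constant histogram `m`, both terms vanish) and zero at `A*`. Along the line `H^{A*} + t h^k`
the slack is a quadratic in `t` vanishing at `0` whose leading coefficient `-(λ s² + n V(h^k))`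
is negative. If `k ∈ A*` but `k' ∉ A*`, adding `k'` (`t = θ`) and removing `k` (`t = -1`) give
nonnegative slack on both sides of `0`, which a strictly concave quadratic vanishing at `0`
cannot have.
-/

open Finset

noncomputable section

section Histogram

variable {ι : Type*} [Fintype ι]

def sumSqDev (H : ι → ℝ) : ℝ :=
  ∑ i, (H i - (∑ j, H j) / Fintype.card ι) ^ 2

def sobolIndex (N : ℝ) (H : ι → ℝ) : ℝ :=
  Fintype.card ι / ((∑ i, H i) * (N - ∑ i, H i)) * sumSqDev H

def indexSlack (N c : ℝ) (H : ι → ℝ) : ℝ :=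
  c * ((∑ i, H i) * (N - ∑ i, H i)) - Fintype.card ι * sumSqDev H

lemma sumSqDev_nonneg (H : ι → ℝ) : 0 ≤ sumSqDev H :=
  sum_nonneg fun _ _ => sq_nonneg _

lemma sumSqDev_const (c : ℝ) : sumSqDev (fun _ : ι => c) = 0 := by
  rcases isEmpty_or_nonempty ι with hι | hι <;> simp [sumSqDev]

lemma sumSqDev_add_smul (H g : ι → ℝ) :
    ∃ b, ∀ t : ℝ, sumSqDev (H + t • g) = sumSqDev H + b * t + sumSqDev g * t ^ 2 := by
  let n : ℝ := Fintype.card ι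
  refine ⟨2 * ∑ i, (H i - (∑ j, H j) / n) * (g i - (∑ j, g j) / n), fun t => ?_⟩
  have hmean : (∑ j, (H + t • g) j) / n = (∑ j, H j) / n + t * ((∑ j, g j) / n) := by
    simp only [Pi.add_apply, Pi.smul_apply, smul_eq_mul, sum_add_distrib, ← mul_sum]
    ring
  rw [sumSqDev, sumSqDev, sumSqDev, hmean]
  simp only [mul_sum, sum_mul, ← sum_add_distrib]
  refine sum_congr rfl fun i _ => ?_
  simp only [Pi.add_apply, Pi.smul_apply, smul_eq_mul]
  ring

lemma indexSlack_add_smul (N c : ℝ) (H g : ι → ℝ) :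
    ∃ b, ∀ t : ℝ, indexSlack N c (H + t • g) = indexSlack N c H + b * t
      - (c * (∑ i, g i) ^ 2 + Fintype.card ι * sumSqDev g) * t ^ 2 := by
  obtain ⟨b, hb⟩ := sumSqDev_add_smul H g
  refine ⟨c * (∑ i, g i) * (N - 2 * ∑ i, H i) - Fintype.card ι * b, fun t => ?_⟩
  have hmass : ∑ i, (H + t • g) i = ∑ i, H i + t * ∑ i, g i := by
    simp only [Pi.add_apply, Pi.smul_apply, smul_eq_mul, sum_add_distrib, ← mul_sum]
  simp only [indexSlack, hmass, hb]
  ring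

lemma indexSlack_eq_sub_mul (N c : ℝ) (H : ι → ℝ) (hS : (∑ i, H i) * (N - ∑ i, H i) ≠ 0) :
    indexSlack N c H = (c - sobolIndex N H) * ((∑ i, H i) * (N - ∑ i, H i)) := by
  rw [indexSlack, sobolIndex, sub_mul, div_mul_eq_mul_div, div_mul_cancel₀ _ hS]

end Histogram

lemma quadratic_neg_of_nonneg_at_neg {a b s t : ℝ} (ha : 0 < a) (hs : s < 0) (ht : 0 < t)
    (hnonneg : 0 ≤ b * s - a * s ^ 2) : b * t - a * t ^ 2 < 0 := by
  have hb : b ≤ a * s := by nlinarith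
  nlinarith [mul_pos ha ht]

section Clusters

variable {ι κ : Type*} [Fintype ι] [DecidableEq κ]

lemma mem_of_mem_of_indexSlack_nonneg {N c θ : ℝ} {h : κ → ι → ℝ} {A : Finset κ} {k k' : κ}
    (hslack : ∀ B : Finset κ, 0 ≤ indexSlack N c (∑ j ∈ B, h j))
    (hA : indexSlack N c (∑ j ∈ A, h j) = 0) (hc : 0 < c) (hk : 0 < ∑ i, h k i)
    (hθ : 0 < θ) (hcorr : h k' = θ • h k) (hkA : k ∈ A) : k' ∈ A := by
  by_contra hk'A
  obtain ⟨b, hb⟩ := indexSlack_add_smul N c (∑ j ∈ A, h j) (h k)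
  set a := c * (∑ i, h k i) ^ 2 + Fintype.card ι * sumSqDev (h k)
  have ha : 0 < a := add_pos_of_pos_of_nonneg (by positivity)
    (mul_nonneg (Nat.cast_nonneg _) (sumSqDev_nonneg _))
  have hadd : indexSlack N c (∑ j ∈ insert k' A, h j) = b * θ - a * θ ^ 2 := by
    rw [sum_insert hk'A, hcorr, add_comm, hb, hA, zero_add]
  have herase : indexSlack N c (∑ j ∈ A.erase k, h j) = b * (-1) - a * (-1) ^ 2 := by
    have hH : ∑ j ∈ A.erase k, h j = ∑ j ∈ A, h j + (-1 : ℝ) • h k := by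
      rw [neg_one_smul, ← add_sum_erase A h hkA, add_neg_cancel_comm]
    rw [hH, hb, hA, zero_add]
  exact (quadratic_neg_of_nonneg_at_neg ha (by norm_num) hθ (herase ▸ hslack _)).not_ge
    (hadd ▸ hslack _)

lemma mem_iff_mem_of_indexSlack_nonneg {N c θ : ℝ} {h : κ → ι → ℝ} {A : Finset κ} {k k' : κ}
    (hslack : ∀ B : Finset κ, 0 ≤ indexSlack N c (∑ j ∈ B, h j))
    (hA : indexSlack N c (∑ j ∈ A, h j) = 0) (hc : 0 < c) (hk : 0 < ∑ i, h k i)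
    (hθ : 0 < θ) (hcorr : h k' = θ • h k) : k ∈ A ↔ k' ∈ A := by
  have hk' : 0 < ∑ i, h k' i := by
    simpa only [hcorr, Pi.smul_apply, smul_eq_mul, ← mul_sum] using mul_pos hθ hk
  have hcorr' : h k = θ⁻¹ • h k' := by rw [hcorr, smul_smul, inv_mul_cancel₀ hθ.ne', one_smul]
  exact ⟨mem_of_mem_of_indexSlack_nonneg hslack hA hc hk hθ hcorr,
    mem_of_mem_of_indexSlack_nonneg hslack hA hc hk' (inv_pos.mpr hθ) hcorr'⟩

end Clusters

section Maximizer

variable {ι κ : Type*} {h : κ → ι → ℝ} {m N : ℝ}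

lemma mass_sum_pos [Fintype ι] (hmass : ∀ k, 0 < ∑ i, h k i) {B : Finset κ} (hB : B.Nonempty) :
    0 < ∑ i, (∑ j ∈ B, h j) i := by
  simp only [Finset.sum_apply]
  rw [sum_comm]
  exact sum_pos (fun j _ => hmass j) hB

lemma sum_univ_eq_const [Fintype κ] (hpart : ∀ i, ∑ k, h k i = m) : ∑ j, h j = fun _ => m :=
  funext fun i => by rw [Finset.sum_apply, hpart]

lemma mass_sum_univ [Fintype ι] [Fintype κ] (hpart : ∀ i, ∑ k, h k i = m)
    (hN : N = Fintype.card ι * m) :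
    ∑ i, (∑ j, h j) i = N := by
  simp [hpart, hN]

lemma mass_mul_sub_mass_pos [Fintype ι] [Fintype κ] (hmass : ∀ k, 0 < ∑ i, h k i)
    (hpart : ∀ i, ∑ k, h k i = m) (hN : N = Fintype.card ι * m) {B : Finset κ}
    (hB : B.Nonempty) (hB' : B ≠ univ) :
    0 < (∑ i, (∑ j ∈ B, h j) i) * (N - ∑ i, (∑ j ∈ B, h j) i) := by
  classical
  have hcompl : N - ∑ i, (∑ j ∈ B, h j) i = ∑ i, (∑ j ∈ Bᶜ, h j) i := by
    rw [← mass_sum_univ hpart hN, ← sum_add_sum_compl B h]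
    simp only [Pi.add_apply, sum_add_distrib, add_sub_cancel_left]
  have hBc : Bᶜ.Nonempty := nonempty_iff_ne_empty.mpr (mt (compl_eq_empty_iff B).mp hB')
  rw [hcompl]
  exact mul_pos (mass_sum_pos hmass hB) (mass_sum_pos hmass hBc)

lemma indexSlack_nonneg_of_forall_sobolIndex_le [Fintype ι] [Fintype κ]
    (hmass : ∀ k, 0 < ∑ i, h k i) (hpart : ∀ i, ∑ k, h k i = m) (hN : N = Fintype.card ι * m)
    {c : ℝ}
    (hmax : ∀ B : Finset κ, B.Nonempty → B ≠ univ → sobolIndex N (∑ j ∈ B, h j) ≤ c)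
    (B : Finset κ) : 0 ≤ indexSlack N c (∑ j ∈ B, h j) := by
  rcases B.eq_empty_or_nonempty with rfl | hB
  · simp [indexSlack, sumSqDev]
  by_cases hB' : B = univ
  · subst hB'
    rw [indexSlack, mass_sum_univ hpart hN, sum_univ_eq_const hpart, sumSqDev_const]
    simp
  have hD := mass_mul_sub_mass_pos hmass hpart hN hB hB'
  rw [indexSlack_eq_sub_mul _ _ _ hD.ne']
  exact mul_nonneg (sub_nonneg.mpr (hmax B hB hB')) hD.le

end Maximizer

end

theorem stmt18_general (nx m K : ℕ)
    (N : ℕ) (hN : N = nx * m)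
    (h : Fin K → Fin nx → ℝ)
    (hpart : ∀ i, ∑ k, h k i = (m : ℝ))
    (hmass : ∀ k, 0 < ∑ i, h k i)
    (SI : Finset (Fin K) → ℝ)
    (hSI : ∀ A : Finset (Fin K),
      SI A = ((nx : ℝ) /
          ((∑ i, ∑ k ∈ A, h k i) * ((N : ℝ) - ∑ i, ∑ k ∈ A, h k i))) *
        ∑ i, ((∑ k ∈ A, h k i) - (∑ i, ∑ k ∈ A, h k i) / (nx : ℝ)) ^ 2)
    (k k' : Fin K) (θ : ℝ) (hθ : 0 < θ)
    (hcorr : ∀ i, h k' i = θ * h k i)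
    (A : Finset (Fin K)) (hA : A.Nonempty) (hAproper : A ≠ Finset.univ)
    (hmax : ∀ B : Finset (Fin K), B.Nonempty → B ≠ Finset.univ → SI B ≤ SI A)
    (hApos : 0 < SI A) :
    k ∈ A ↔ k' ∈ A := by
  have hSI' : ∀ B, SI B = sobolIndex N (∑ j ∈ B, h j) := fun B => by
    simp [hSI, sobolIndex, sumSqDev, Finset.sum_apply]
  simp only [hSI'] at hmax hApos
  have hN' : (N : ℝ) = Fintype.card (Fin nx) * m := by simp [hN]
  have hslack := indexSlack_nonneg_of_forall_sobolIndex_le hmass hpart hN' hmax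
  have hslackA : indexSlack N (sobolIndex N (∑ j ∈ A, h j)) (∑ j ∈ A, h j) = 0 := by
    rw [indexSlack_eq_sub_mul _ _ _ (mass_mul_sub_mass_pos hmass hpart hN' hA hAproper).ne',
      sub_self, zero_mul]
  exact mem_iff_mem_of_indexSlack_nonneg hslack hslackA hApos (hmass k) hθ (funext hcorr)

/-- Proposition 1: two elementary clusters with perfectly correlated histograms
lie on the same side of a 2-partition (obtained by merging elementary clusters)
that maximizes the discretized first-order region-based Sobol' index. -/
theorem stmt18 (nx m K : ℕ) (hnx : 1 ≤ nx) (hm : 1 ≤ m) (hK : 3 ≤ K)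
    (N : ℕ) (hN : N = nx * m)
    (h : Fin K → Fin nx → ℝ)
    (hnonneg : ∀ k i, 0 ≤ h k i)
    (hpart : ∀ i, ∑ k, h k i = (m : ℝ))
    (hmass : ∀ k, 0 < ∑ i, h k i)
    (SI : Finset (Fin K) → ℝ)
    (hSI : ∀ A : Finset (Fin K),
      SI A = ((nx : ℝ) /
          ((∑ i, ∑ k ∈ A, h k i) * ((N : ℝ) - ∑ i, ∑ k ∈ A, h k i))) *
        ∑ i, ((∑ k ∈ A, h k i) - (∑ i, ∑ k ∈ A, h k i) / (nx : ℝ)) ^ 2)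
    (k k' : Fin K) (hkk' : k ≠ k') (θ : ℝ) (hθ : 0 < θ)
    (hcorr : ∀ i, h k' i = θ * h k i)
    (A : Finset (Fin K)) (hA : A.Nonempty) (hAproper : A ≠ Finset.univ)
    (hmax : ∀ B : Finset (Fin K), B.Nonempty → B ≠ Finset.univ → SI B ≤ SI A)
    (hApos : 0 < SI A) :
    k ∈ A ↔ k' ∈ A :=
  stmt18_general nx m K N hN h hpart hmass SI hSI k k' θ hθ hcorr A hA hAproper hmax hApos
end
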